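/- arXiv:2208.00577 — 3 statements merged into one kernel-verified Lean document; each statement's English description precedes it below -/
import Mathlib

section
/- Let m ≥ 1 and ℓ ≥ 1. There exists an involution ι on the set M_{m×ℓ} such that for every M ∈ M_{m×ℓ}: w(M) = h(ι(M)), h(M) = w(ι(M)), and |M| = |ι(M)|. -/
open Finset

/-- Partial sum of the first `i` entries of a sequence. -/
def pSum (x : ℕ → ℤ) (i : ℕ) : ℤ := ∑ k ∈ Finset.range i, x k

/-- An `(ℓ,m)`-Dyck path in step coordinates, encoded as a sequence `ℕ → ℤ` of
nonnegative integers vanishing beyond index `ℓ`. -/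
def IsDyck (ℓ m : ℕ) (x : ℕ → ℤ) : Prop :=
  (∀ i, 0 ≤ x i) ∧
  (∀ i < ℓ, pSum x (i + 1) ≤ (m : ℤ) * (i + 1)) ∧
  pSum x (ℓ + 1) = (m : ℤ) * (ℓ + 1) ∧
  (∀ i, ℓ < i → x i = 0)

/-- `δ⁺_{ij}(x) = min(x_i, max(0, (x_i−m)+⋯+(x_j−m)−1))`. -/
def deltaP (m : ℕ) (x : ℕ → ℤ) (i j : ℕ) : ℤ :=
  min (x i) (max 0 ((∑ k ∈ Finset.Icc i j, (x k - (m : ℤ))) - 1))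

/-- `δ⁻_{ij}(x) = min(x_{i−1}, max(0, (m−x_i)+⋯+(m−x_j)))`. -/
def deltaM (m : ℕ) (x : ℕ → ℤ) (i j : ℕ) : ℤ :=
  min (x (i - 1)) (max 0 (∑ k ∈ Finset.Icc i j, ((m : ℤ) - x k)))

/-- `degr⁺(x) = Σ_{1 ≤ i ≤ j ≤ ℓ−1} δ⁺_{ij}(x)`. -/
def degrP (ℓ m : ℕ) (x : ℕ → ℤ) : ℤ :=
  ∑ i ∈ Finset.Icc 1 (ℓ - 1), ∑ j ∈ Finset.Icc i (ℓ - 1), deltaP m x i j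

/-- `degr⁻(x) = Σ_{1 ≤ i ≤ j ≤ ℓ−1} δ⁻_{ij}(x)`. -/
def degrM (ℓ m : ℕ) (x : ℕ → ℤ) : ℤ :=
  ∑ i ∈ Finset.Icc 1 (ℓ - 1), ∑ j ∈ Finset.Icc i (ℓ - 1), deltaM m x i j

/-- `degr(x) = degr⁺(x) + degr⁻(x)`. -/
def degr (ℓ m : ℕ) (x : ℕ → ℤ) : ℤ := degrP ℓ m x + degrM ℓ m x

/-- Position coordinates `a_i = (m−x_0)+⋯+(m−x_{i−1})`, with the convention
`a_s = 0` for `s > ℓ`. -/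
def dyckPos (ℓ m : ℕ) (x : ℕ → ℤ) (i : ℕ) : ℤ :=
  if i ≤ ℓ then (m : ℤ) * i - pSum x i else 0

/-- `area(x) = a_1 + ⋯ + a_ℓ = M − (ℓ·x_0 + ⋯ + 1·x_{ℓ−1})`. -/
def area (ℓ m : ℕ) (x : ℕ → ℤ) : ℤ := ∑ i ∈ Finset.Icc 1 ℓ, dyckPos ℓ m x i

/-- `point(x)`: the minimal `r ≤ ℓ` such that `a_r − a_ℓ > −m`. -/
noncomputable def dyckPoint (ℓ m : ℕ) (x : ℕ → ℤ) : ℕ :=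
  sInf {r : ℕ | -(m : ℤ) < dyckPos ℓ m x r - dyckPos ℓ m x ℓ}

/-- `pair(x)`: the minimal `r < ℓ` such that `a_r − a_{r+2} ≥ −m`. -/
noncomputable def dyckPair (ℓ m : ℕ) (x : ℕ → ℤ) : ℕ :=
  sInf {r : ℕ | r < ℓ ∧ -(m : ℤ) ≤ dyckPos ℓ m x r - dyckPos ℓ m x (r + 2)}

/-- `x` is rightable at `r`. -/
def RightableAt (ℓ m : ℕ) (x : ℕ → ℤ) (r : ℕ) : Prop :=
  dyckPoint ℓ m x = r ∧ r < ℓ ∧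
    ∀ i, i + 2 ≤ r → dyckPos ℓ m x i - dyckPos ℓ m x (i + 2) < -(m : ℤ)

/-- `x` is leftable at `r`. -/
def LeftableAt (ℓ m : ℕ) (x : ℕ → ℤ) (r : ℕ) : Prop :=
  dyckPair ℓ m x = r ∧ dyckPos ℓ m x (r + 1) - dyckPos ℓ m x ℓ ≤ (m : ℤ) + 1

/-- Reconstruct step coordinates from position coordinates:
`x_i = m + a_i − a_{i+1}` (with `a_{ℓ+1} = 0`), vanishing beyond `ℓ`. -/
def fromPos (ℓ m : ℕ) (a : ℕ → ℤ) : ℕ → ℤ :=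
  fun i => if i ≤ ℓ then (m : ℤ) + a i - a (i + 1) else 0

/-- Position coordinates of `cycleright(r,x)`:
`[a_0,…,a_r, a_ℓ+1, a_{r+1},…,a_{ℓ−1}]`. -/
def rightPosSeq (ℓ m : ℕ) (x : ℕ → ℤ) (r : ℕ) : ℕ → ℤ := fun i =>
  if i ≤ r then dyckPos ℓ m x i
  else if i = r + 1 then dyckPos ℓ m x ℓ + 1
  else if i ≤ ℓ then dyckPos ℓ m x (i - 1)
  else 0

/-- `right(x)` when `x` is rightable at `r`. -/
def rightMap (ℓ m : ℕ) (x : ℕ → ℤ) (r : ℕ) : ℕ → ℤ := fromPos ℓ m (rightPosSeq ℓ m x r)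

/-- Position coordinates of `cycleleft(r,x)`:
`[a_0,…,a_r, a_{r+2},…,a_ℓ, a_{r+1}−1]`. -/
def leftPosSeq (ℓ m : ℕ) (x : ℕ → ℤ) (r : ℕ) : ℕ → ℤ := fun i =>
  if i ≤ r then dyckPos ℓ m x i
  else if i < ℓ then dyckPos ℓ m x (i + 1)
  else if i = ℓ then dyckPos ℓ m x (r + 1) - 1
  else 0

/-- `left(x)` when `x` is leftable at `r`. -/
def leftMap (ℓ m : ℕ) (x : ℕ → ℤ) (r : ℕ) : ℕ → ℤ := fromPos ℓ m (leftPosSeq ℓ m x r)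

def Rightable (ℓ m : ℕ) (x : ℕ → ℤ) : Prop := ∃ r, RightableAt ℓ m x r

def Leftable (ℓ m : ℕ) (x : ℕ → ℤ) : Prop := ∃ r, LeftableAt ℓ m x r

/-- One application of `right` (meaningful when `x` is rightable). -/
noncomputable def rightStep (ℓ m : ℕ) (x : ℕ → ℤ) : ℕ → ℤ := rightMap ℓ m x (dyckPoint ℓ m x)

/-- One application of `left` (meaningful when `x` is leftable). -/
noncomputable def leftStep (ℓ m : ℕ) (x : ℕ → ℤ) : ℕ → ℤ := leftMap ℓ m x (dyckPair ℓ m x)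

/-- `y = lowest(x)`: `y = rightⁱ(x)` with all intermediate steps rightable and
`y` itself not rightable. -/
def IsLowestOf (ℓ m : ℕ) (x y : ℕ → ℤ) : Prop :=
  (∃ k, (∀ j < k, Rightable ℓ m ((rightStep ℓ m)^[j] x)) ∧ y = (rightStep ℓ m)^[k] x) ∧
    ¬ Rightable ℓ m y

/-- `x` is disconnected: some `leftⁱ(x)` is a Dyck path that is not leftable. -/
def Disconnected (ℓ m : ℕ) (x : ℕ → ℤ) : Prop :=
  ∃ i, IsDyck ℓ m ((leftStep ℓ m)^[i] x) ∧ ¬ Leftable ℓ m ((leftStep ℓ m)^[i] x)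

def ConnectedPath (ℓ m : ℕ) (x : ℕ → ℤ) : Prop := ¬ Disconnected ℓ m x

/-- `string(v₀) = {rightⁱ(v₀) : 0 ≤ i ≤ b}` where `right^b(v₀) = lowest(v₀)`. -/
def stringSet (ℓ m : ℕ) (v0 : ℕ → ℤ) : Set (ℕ → ℤ) :=
  {y | ∃ i, (∀ j < i, Rightable ℓ m ((rightStep ℓ m)^[j] v0)) ∧ y = (rightStep ℓ m)^[i] v0}

/-- A matrix in `𝐌_{m×ℓ}`, encoded as `M : ℕ → ℕ → Option Bool`
(`some false` = 0, `some true` = 1, `none` = ∗; entries outside the `m×ℓ`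
range are normalized to `none`). -/
def IsGoodMatrix (m ℓ : ℕ) (M : ℕ → ℕ → Option Bool) : Prop :=
  (∀ i j, m ≤ i ∨ ℓ ≤ j → M i j = none) ∧
  (∀ i j i' j', i < m → j < ℓ → i' < m → j' < ℓ → M i j = none →
    (i < i' ∨ (i = i' ∧ j < j')) → M i' j' = none) ∧
  M 0 0 = some false ∧
  (∀ i j, i < m → j < ℓ → M i j ≠ none →
    (M i j = some true ∨
      ∃ i' j', i' < m ∧ j' < ℓ ∧ (i < i' ∨ (i = i' ∧ j < j')) ∧ M i' j' ≠ none)) ∧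
  (∀ i j, M i j = some false → M (i + 1) j ≠ some true)

/-- `|M|`: the number of `(0,1)` pairs of entries of `M` in contact. -/
def contactCount (m ℓ : ℕ) (M : ℕ → ℕ → Option Bool) : ℕ :=
  (((Finset.range m ×ˢ Finset.range ℓ) ×ˢ (Finset.range m ×ˢ Finset.range ℓ)).filter
    fun p => M p.1.1 p.1.2 = some false ∧ M p.2.1 p.2.2 = some true ∧
      ((p.2.1 = p.1.1 ∧ p.1.2 < p.2.2) ∨ (p.2.1 = p.1.1 + 1 ∧ p.2.2 ≤ p.1.2))).card

/-- `h(M)`: the number of `0` entries of `M`. -/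
def zeroCount (m ℓ : ℕ) (M : ℕ → ℕ → Option Bool) : ℕ :=
  ((Finset.range m ×ˢ Finset.range ℓ).filter fun p => M p.1 p.2 = some false).card

/-- `w(M)`: the number of `1` entries of `M`. -/
def oneCount (m ℓ : ℕ) (M : ℕ → ℕ → Option Bool) : ℕ :=
  ((Finset.range m ×ˢ Finset.range ℓ).filter fun p => M p.1 p.2 = some true).card

/-- A partition with all parts ≤ `b`, as a weakly decreasing list of positive
integers. -/
def IsPartitionList (b : ℕ) (L : List ℕ) : Prop :=
  L.Pairwise (· ≥ ·) ∧ ∀ p ∈ L, 0 < p ∧ p ≤ b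

/-- The `(ℓ−1)`-width `w^{ℓ−1}(λ)`: the sum of the lengths of the
`(ℓ−1)`-hook rows of `λ` (row 1 is a hook row; if row `i` is a hook row, so is
row `i + ℓ − λ_i`). -/
def hookWidth (ℓ : ℕ) : List ℕ → ℕ
  | [] => 0
  | p :: rest => p + hookWidth ℓ (rest.drop (ℓ - p - 1))
  termination_by L => L.length
  decreasing_by
    simp only [List.length_drop, List.length_cons]
    omega

/-- The number of `1` entries in column `j` of `M`. -/
def colOnes (m : ℕ) (M : ℕ → ℕ → Option Bool) (j : ℕ) : ℕ :=
  ((Finset.range m).filter fun i => M i j = some true).card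

/-- The map `f`: the path with position coordinates `[0,a_1,…,a_ℓ]` where `a_j`
is the number of `1` entries in column `j` of `M`. -/
def pathOfMatrix (ℓ m : ℕ) (M : ℕ → ℕ → Option Bool) : ℕ → ℤ :=
  fromPos ℓ m fun i => if i = 0 then 0 else if i ≤ ℓ then (colOnes m M (i - 1) : ℤ) else 0

/-- The number of `1` entries in contact with the `0` entry at `(i,j)`. -/
def zContacts (m ℓ : ℕ) (M : ℕ → ℕ → Option Bool) (i j : ℕ) : ℕ :=
  ((Finset.range m ×ˢ Finset.range ℓ).filter
    fun q => M q.1 q.2 = some true ∧ ((q.1 = i ∧ j < q.2) ∨ (q.1 = i + 1 ∧ q.2 ≤ j))).card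

/-- The number of `0` entries strictly before `(i,j)` in row-reading order. -/
def zIndex (m ℓ : ℕ) (M : ℕ → ℕ → Option Bool) (i j : ℕ) : ℕ :=
  ((Finset.range m ×ˢ Finset.range ℓ).filter
    fun q => M q.1 q.2 = some false ∧ (q.1 < i ∨ (q.1 = i ∧ q.2 < j))).card

/-- `M` realizes the partition `L`: the `i`-th `0` entry of `M` in row-reading
order is in contact with exactly `L_i` entries equal to `1`. -/
def MatRealizes (m ℓ : ℕ) (M : ℕ → ℕ → Option Bool) (L : List ℕ) : Prop :=
  zeroCount m ℓ M = L.length ∧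
  ∀ i j, i < m → j < ℓ → M i j = some false →
    zContacts m ℓ M i j = L.getD (zIndex m ℓ M i j) 0

/-- `x = f(g(L))` for the bijections `f`, `g` (characterized relationally). -/
def IsFG (ℓ m : ℕ) (L : List ℕ) (x : ℕ → ℤ) : Prop :=
  ∃ M, IsGoodMatrix m ℓ M ∧ contactCount m ℓ M < (ℓ - 1) * m ∧ MatRealizes m ℓ M L ∧
    x = pathOfMatrix ℓ m M

/-- The partition with `p i` parts of size `ℓ−1−i`, for `0 ≤ i ≤ ℓ−2`. -/
def partitionOfCounts (ℓ : ℕ) (p : ℕ → ℕ) : List ℕ :=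
  (List.range (ℓ - 1)).flatMap fun i => List.replicate (p i) (ℓ - 1 - i)

/-- `M = m·ℓ(ℓ+1)/2`, the maximal possible area. -/
def MVal (ℓ m : ℕ) : ℕ := m * ℓ * (ℓ + 1) / 2

/-- The predicate `extendable(ℓ,m,d)`. -/
def Extendable (ℓ m : ℕ) (d : ℤ) : Prop :=
  ∃ ext : List ℕ → Set (ℕ → ℤ),
    (∀ L, IsPartitionList (ℓ - 1) L → (L.sum : ℤ) = d →
      (ext L ⊆ {w | IsDyck ℓ m w ∧ degr ℓ m w = d ∧ Disconnected ℓ m w}) ∧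
      (∀ w w', w ∈ ext L → w' ∈ ext L → area ℓ m w = area ℓ m w' → w = w') ∧
      (∀ v0, IsFG ℓ m L v0 → ∀ vs, IsLowestOf ℓ m v0 vs →
        area ℓ m vs ≤ (MVal ℓ m : ℤ) - L.sum - L.length ∧
        ∀ a : ℤ, (area ℓ m vs < a ∧ a ≤ (MVal ℓ m : ℤ) - L.sum - L.length) ↔
          ∃ w ∈ ext L, area ℓ m w = a)) ∧
    ({w | IsDyck ℓ m w ∧ degr ℓ m w = d ∧ Disconnected ℓ m w} =
      ⋃ L ∈ {L : List ℕ | IsPartitionList (ℓ - 1) L ∧ (L.sum : ℤ) = d}, ext L) ∧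
    (∀ L L', IsPartitionList (ℓ - 1) L → (L.sum : ℤ) = d →
      IsPartitionList (ℓ - 1) L' → (L'.sum : ℤ) = d → L ≠ L' → ext L ∩ ext L' = ∅)

/-!
Read a matrix of `𝐌_{m×ℓ}` in row-reading order as a word `0 ⋯ 1 ∗ ∗ ⋯` of some length `N`.
In that word the `(0,1)` pairs in contact are exactly the pairs `k < k' ≤ k + ℓ`, and the
condition "no `0` directly above a `1`" says that no `0` at `k` is followed by a `1` at `k + ℓ`.
Both are invariant under reversing the first `N` letters and exchanging `0` and `1`, which also
swaps the numbers of `0`s and `1`s; refolding the word into rows of length `ℓ` gives `ι`.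
-/

section RowMajor

variable {ℓ i j i' j' k k' : ℕ}

lemma rowMajor_div (hj : j < ℓ) : (i * ℓ + j) / ℓ = i := by
  rw [add_comm, Nat.add_mul_div_right _ _ (by omega), Nat.div_eq_of_lt hj, zero_add]

lemma rowMajor_mod (hj : j < ℓ) : (i * ℓ + j) % ℓ = j := by
  rw [Nat.mul_add_mod', Nat.mod_eq_of_lt hj]

lemma rowMajor_lt_rowMajor_iff (hj : j < ℓ) (hj' : j' < ℓ) :
    i * ℓ + j < i' * ℓ + j' ↔ i < i' ∨ (i = i' ∧ j < j') := by
  constructor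
  · intro h
    rcases lt_trichotomy i i' with hi | rfl | hi
    · exact Or.inl hi
    · exact Or.inr ⟨rfl, by omega⟩
    · nlinarith
  · rintro (hi | ⟨rfl, hj⟩)
    · nlinarith
    · omega

lemma contact_iff_rowMajor (hj : j < ℓ) (hj' : j' < ℓ) :
    ((i' = i ∧ j < j') ∨ (i' = i + 1 ∧ j' ≤ j)) ↔
      i * ℓ + j < i' * ℓ + j' ∧ i' * ℓ + j' ≤ i * ℓ + j + ℓ := by
  have hlt := rowMajor_lt_rowMajor_iff (i := i) (i' := i') hj hj'
  have hnext := rowMajor_lt_rowMajor_iff (i := i + 1) (i' := i') hj hj'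
  rw [show (i + 1) * ℓ + j = i * ℓ + j + ℓ by ring] at hnext
  omega

lemma div_mod_lex_of_lt (hℓ : 0 < ℓ) (h : k < k') :
    k / ℓ < k' / ℓ ∨ (k / ℓ = k' / ℓ ∧ k % ℓ < k' % ℓ) := by
  rwa [← rowMajor_lt_rowMajor_iff (Nat.mod_lt _ hℓ) (Nat.mod_lt _ hℓ), Nat.div_add_mod',
    Nat.div_add_mod']

lemma sum_product_range_rowMajor {β : Type*} [AddCommMonoid β] (f : ℕ → β) (m ℓ : ℕ) :
    ∑ p ∈ range m ×ˢ range ℓ, f (p.1 * ℓ + p.2) = ∑ k ∈ range (m * ℓ), f k := by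
  rw [sum_product]
  induction m with
  | zero => simp
  | succ m ih => rw [sum_range_succ, ih, Nat.succ_mul, sum_range_add]

end RowMajor

section Words

variable {ℓ N : ℕ} {u : ℕ → Option Bool}

/-- `u` is the row-reading word of a matrix of some `𝐌_{m×ℓ}` with exactly `N` entries other
than `∗`. -/
structure IsGoodWord (ℓ N : ℕ) (u : ℕ → Option Bool) : Prop where
  eq_none_iff : ∀ k, u k = none ↔ N ≤ k
  first : u 0 = some false
  last : u (N - 1) = some true
  not_zero_above_one : ∀ k, u k = some false → u (k + ℓ) ≠ some true

noncomputable def wordLength (u : ℕ → Option Bool) : ℕ := sInf {k | u k = none}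

lemma eq_none_iff_wordLength_le (hmono : ∀ k, u k = none → u (k + 1) = none)
    (hne : ∃ k, u k = none) (k : ℕ) : u k = none ↔ wordLength u ≤ k := by
  refine ⟨fun h => Nat.sInf_le h, fun h => ?_⟩
  induction k, h using Nat.le_induction with
  | base => exact Nat.sInf_mem hne
  | succ k _ ih => exact hmono k ih

lemma IsGoodWord.wordLength_eq (hu : IsGoodWord ℓ N u) : wordLength u = N := by
  have hset : {k | u k = none} = Set.Ici N := Set.ext hu.eq_none_iff
  rw [wordLength, hset, csInf_Ici]

lemma IsGoodWord.pos (hu : IsGoodWord ℓ N u) : 0 < N := by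
  by_contra h
  simpa [hu.first] using (hu.eq_none_iff 0).2 (by omega)

lemma IsGoodWord.eq_none_of_le (hu : IsGoodWord ℓ N u) (k : ℕ) (hk : N ≤ k) :
    u k = none :=
  (hu.eq_none_iff k).2 hk

def reverseComplement (N : ℕ) (u : ℕ → Option Bool) (k : ℕ) : Option Bool :=
  if k < N then (u (N - 1 - k)).map not else none

lemma reverseComplement_of_lt {k : ℕ} (hk : k < N) :
    reverseComplement N u k = (u (N - 1 - k)).map not := if_pos hk

lemma Option.map_not_eq_some_iff {o : Option Bool} {b : Bool} :
    o.map not = some b ↔ o = some !b := by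
  cases o <;> simp [Bool.not_eq_eq_eq_not]

lemma isGoodWord_reverseComplement (hu : IsGoodWord ℓ N u) :
    IsGoodWord ℓ N (reverseComplement N u) := by
  have hN := hu.pos
  refine ⟨fun k => ?_, ?_, ?_, fun k hk hk' => ?_⟩
  · by_cases hk : k < N
    · simp [reverseComplement_of_lt hk, (hu.eq_none_iff _).not, hk.not_ge]
      omega
    · simp [reverseComplement, hk, not_lt.1 hk]
  · rw [reverseComplement_of_lt hN, Nat.sub_zero, hu.last]; rfl
  · rw [reverseComplement_of_lt (by omega), Nat.sub_self, hu.first]; rfl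
  · have hkℓ : k + ℓ < N := by
      by_contra h; simp [reverseComplement, h] at hk'
    rw [reverseComplement_of_lt (by omega), Option.map_not_eq_some_iff] at hk
    rw [reverseComplement_of_lt hkℓ, Option.map_not_eq_some_iff] at hk'
    have := hu.not_zero_above_one _ hk'
    rw [show N - 1 - (k + ℓ) + ℓ = N - 1 - k by omega] at this
    exact this hk

lemma reverseComplement_reverseComplement (hu : ∀ k, N ≤ k → u k = none) :
    reverseComplement N (reverseComplement N u) = u := by
  funext k
  by_cases hk : k < N
  · rw [reverseComplement_of_lt hk, reverseComplement_of_lt (by omega),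
      show N - 1 - (N - 1 - k) = k by omega]
    cases u k <;> simp
  · simp [reverseComplement, hk, hu k (by omega)]

def letterCount (N : ℕ) (u : ℕ → Option Bool) (b : Bool) : ℕ := #{k ∈ range N | u k = some b}

def wordContacts (ℓ N : ℕ) (u : ℕ → Option Bool) : ℕ :=
  #{x ∈ range N ×ˢ range N |
    u x.1 = some false ∧ u x.2 = some true ∧ x.1 < x.2 ∧ x.2 ≤ x.1 + ℓ}

lemma letterCount_reverseComplement (b : Bool) :
    letterCount N (reverseComplement N u) b = letterCount N u !b := by
  rw [letterCount, letterCount, card_filter, card_filter, ← sum_range_reflect]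
  refine sum_congr rfl fun k hk => ?_
  rw [mem_range] at hk
  rw [reverseComplement_of_lt (by omega), show N - 1 - (N - 1 - k) = k by omega]
  simp only [Option.map_not_eq_some_iff]

lemma wordContacts_reverseComplement :
    wordContacts ℓ N (reverseComplement N u) = wordContacts ℓ N u := by
  let σ : ℕ × ℕ → ℕ × ℕ := fun x => (N - 1 - x.2, N - 1 - x.1)
  have hσσ : ∀ x ∈ range N ×ˢ range N, σ (σ x) = x := by
    rintro ⟨k, k'⟩ h
    simp only [mem_product, mem_range] at h
    simp only [σ, Prod.mk.injEq]
    omega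
  refine card_nbij' σ σ ?_ ?_ (fun x hx => hσσ x (mem_filter.1 hx).1)
    (fun x hx => hσσ x (mem_filter.1 hx).1)
  · rintro ⟨k, k'⟩ h
    simp only [σ, mem_coe, mem_filter, mem_product, mem_range] at h ⊢
    obtain ⟨⟨hk, hk'⟩, h0, h1, hlt, hle⟩ := h
    rw [reverseComplement_of_lt hk, Option.map_not_eq_some_iff] at h0
    rw [reverseComplement_of_lt hk', Option.map_not_eq_some_iff] at h1
    exact ⟨⟨by omega, by omega⟩, h1, h0, by omega, by omega⟩
  · rintro ⟨k, k'⟩ h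
    simp only [σ, mem_coe, mem_filter, mem_product, mem_range] at h ⊢
    obtain ⟨⟨hk, hk'⟩, h0, h1, hlt, hle⟩ := h
    rw [reverseComplement_of_lt (by omega), reverseComplement_of_lt (by omega),
      Option.map_not_eq_some_iff, Option.map_not_eq_some_iff,
      show N - 1 - (N - 1 - k') = k' by omega, show N - 1 - (N - 1 - k) = k by omega]
    exact ⟨⟨by omega, by omega⟩, h1, h0, by omega, by omega⟩

end Words

section Matrices

variable {m ℓ N : ℕ} {M : ℕ → ℕ → Option Bool} {u : ℕ → Option Bool}

def wordOf (ℓ : ℕ) (M : ℕ → ℕ → Option Bool) (k : ℕ) : Option Bool := M (k / ℓ) (k % ℓ)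

def matOfWord (ℓ : ℕ) (u : ℕ → Option Bool) (i j : ℕ) : Option Bool :=
  if j < ℓ then u (i * ℓ + j) else none

lemma wordOf_rowMajor {i j : ℕ} (hj : j < ℓ) : wordOf ℓ M (i * ℓ + j) = M i j := by
  rw [wordOf, rowMajor_div hj, rowMajor_mod hj]

lemma matOfWord_div_mod (hℓ : 0 < ℓ) (k : ℕ) : matOfWord ℓ u (k / ℓ) (k % ℓ) = u k := by
  rw [matOfWord, if_pos (Nat.mod_lt _ hℓ), Nat.div_add_mod']

lemma matOfWord_of_mem {p : ℕ × ℕ} (hp : p ∈ range m ×ˢ range ℓ) :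
    matOfWord ℓ u p.1 p.2 = u (p.1 * ℓ + p.2) :=
  if_pos (mem_range.1 (mem_product.1 hp).2)

lemma IsGoodMatrix.width_pos (hM : IsGoodMatrix m ℓ M) : 0 < ℓ := by
  by_contra h
  simpa [hM.2.2.1] using hM.1 0 0 (Or.inr (by omega))

lemma IsGoodMatrix.matOfWord_wordOf (hM : IsGoodMatrix m ℓ M) : matOfWord ℓ (wordOf ℓ M) = M := by
  funext i j
  by_cases hj : j < ℓ
  · rw [matOfWord, if_pos hj, wordOf_rowMajor hj]
  · rw [matOfWord, if_neg hj, hM.1 i j (Or.inr (by omega))]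

lemma IsGoodMatrix.wordOf_eq_none_iff (hM : IsGoodMatrix m ℓ M) (k : ℕ) :
    wordOf ℓ M k = none ↔ wordLength (wordOf ℓ M) ≤ k := by
  have hℓ := hM.width_pos
  refine eq_none_iff_wordLength_le (fun k hk => ?_) ⟨m * ℓ, ?_⟩ k
  · by_cases hk1 : k + 1 < m * ℓ
    · exact hM.2.1 _ _ _ _ ((Nat.div_lt_iff_lt_mul hℓ).2 (by omega)) (Nat.mod_lt _ hℓ)
        ((Nat.div_lt_iff_lt_mul hℓ).2 hk1) (Nat.mod_lt _ hℓ) hk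
        (div_mod_lex_of_lt hℓ k.lt_succ_self)
    · exact hM.1 _ _ (Or.inl ((Nat.le_div_iff_mul_le hℓ).2 (by omega)))
  · exact hM.1 _ _ (Or.inl (by rw [Nat.mul_div_cancel _ hℓ]))

lemma IsGoodMatrix.wordLength_le (hM : IsGoodMatrix m ℓ M) : wordLength (wordOf ℓ M) ≤ m * ℓ :=
  (hM.wordOf_eq_none_iff _).1 (hM.1 _ _ (Or.inl (by rw [Nat.mul_div_cancel _ hM.width_pos])))

lemma IsGoodMatrix.isGoodWord (hM : IsGoodMatrix m ℓ M) :
    IsGoodWord ℓ (wordLength (wordOf ℓ M)) (wordOf ℓ M) := by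
  have hℓ := hM.width_pos
  set N := wordLength (wordOf ℓ M)
  have hfirst : wordOf ℓ M 0 = some false := by simpa [wordOf] using hM.2.2.1
  refine ⟨hM.wordOf_eq_none_iff, hfirst, ?_, fun k hk => ?_⟩
  · have hN : 0 < N := by
      by_contra h
      simp [(hM.wordOf_eq_none_iff 0).2 (by omega)] at hfirst
    have hi : (N - 1) / ℓ < m := (Nat.div_lt_iff_lt_mul hℓ).2 (by have := hM.wordLength_le; omega)
    have hne : M ((N - 1) / ℓ) ((N - 1) % ℓ) ≠ none := by
      change wordOf ℓ M (N - 1) ≠ none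
      rw [ne_eq, hM.wordOf_eq_none_iff]; omega
    obtain hlast | ⟨i', j', -, hj', hlex, hne'⟩ := hM.2.2.2.1 _ _ hi (Nat.mod_lt _ hℓ) hne
    · exact hlast
    · rw [← rowMajor_lt_rowMajor_iff (Nat.mod_lt _ hℓ) hj', Nat.div_add_mod'] at hlex
      rw [← wordOf_rowMajor (M := M) hj', ne_eq, hM.wordOf_eq_none_iff] at hne'
      omega
  · rw [wordOf, Nat.add_div_right _ hℓ, Nat.add_mod_right]
    exact hM.2.2.2.2 _ _ hk

lemma isGoodMatrix_matOfWord (hℓ : 0 < ℓ) (hu : IsGoodWord ℓ N u) (hN : N ≤ m * ℓ) :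
    IsGoodMatrix m ℓ (matOfWord ℓ u) := by
  have hnone : ∀ {i j}, j < ℓ → (matOfWord ℓ u i j = none ↔ N ≤ i * ℓ + j) := fun hj => by
    rw [matOfWord, if_pos hj, hu.eq_none_iff]
  refine ⟨fun i j hij => ?_, fun i j i' j' _ hj _ hj' h hlex => ?_, ?_, fun i j hi hj h => ?_,
    fun i j h0 h1 => ?_⟩
  · by_cases hj : j < ℓ
    · rw [hnone hj]
      have := Nat.mul_le_mul_right ℓ (hij.resolve_right (by omega))
      omega
    · rw [matOfWord, if_neg hj]
  · rw [hnone hj] at h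
    rw [hnone hj']
    have := (rowMajor_lt_rowMajor_iff hj hj').2 hlex
    omega
  · rw [matOfWord, if_pos hℓ, zero_mul, zero_add, hu.first]
  · rw [ne_eq, hnone hj] at h
    by_cases hlast : i * ℓ + j + 1 = N
    · left
      rw [matOfWord, if_pos hj, ← hu.last]
      congr 1
      omega
    · right
      refine ⟨(i * ℓ + j + 1) / ℓ, (i * ℓ + j + 1) % ℓ,
        (Nat.div_lt_iff_lt_mul hℓ).2 (by omega), Nat.mod_lt _ hℓ, ?_, ?_⟩
      · have := div_mod_lex_of_lt hℓ (i * ℓ + j).lt_succ_self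
        rwa [rowMajor_div hj, rowMajor_mod hj] at this
      · rw [matOfWord_div_mod hℓ, ne_eq, hu.eq_none_iff]
        omega
  · by_cases hj : j < ℓ
    · rw [matOfWord, if_pos hj] at h0 h1
      rw [show (i + 1) * ℓ + j = i * ℓ + j + ℓ by ring] at h1
      exact hu.not_zero_above_one _ h0 h1
    · simp [matOfWord, hj] at h0

lemma card_filter_matOfWord (hN : N ≤ m * ℓ) (hu : ∀ k, N ≤ k → u k = none) (b : Bool) :
    #{p ∈ range m ×ˢ range ℓ | matOfWord ℓ u p.1 p.2 = some b} = letterCount N u b := by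
  rw [letterCount, card_filter, card_filter]
  calc ∑ p ∈ range m ×ˢ range ℓ, (if matOfWord ℓ u p.1 p.2 = some b then 1 else 0)
      = ∑ p ∈ range m ×ˢ range ℓ, (if u (p.1 * ℓ + p.2) = some b then 1 else 0) :=
        sum_congr rfl fun p hp => by rw [matOfWord_of_mem hp]
    _ = ∑ k ∈ range (m * ℓ), (if u k = some b then 1 else 0) :=
        sum_product_range_rowMajor (fun k => if u k = some b then 1 else 0) m ℓ
    _ = ∑ k ∈ range N, (if u k = some b then 1 else 0) :=
        (sum_subset (range_subset_range.2 hN) fun k _ hk => by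
          simp [hu k (by simpa using hk)]).symm

lemma contactCount_matOfWord (hN : N ≤ m * ℓ) (hu : ∀ k, N ≤ k → u k = none) :
    contactCount m ℓ (matOfWord ℓ u) = wordContacts ℓ N u := by
  let g : ℕ → ℕ → ℕ := fun k k' =>
    if u k = some false ∧ u k' = some true ∧ k < k' ∧ k' ≤ k + ℓ then 1 else 0
  have hg : ∀ k k', N ≤ k ∨ N ≤ k' → g k k' = 0 := by
    rintro k k' (hk | hk) <;> simp [g, hu _ hk]
  calc contactCount m ℓ (matOfWord ℓ u)
      = ∑ p ∈ range m ×ˢ range ℓ, ∑ q ∈ range m ×ˢ range ℓ,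
          g (p.1 * ℓ + p.2) (q.1 * ℓ + q.2) := by
        rw [contactCount, card_filter, sum_product]
        refine sum_congr rfl fun p hp => sum_congr rfl fun q hq => ?_
        have hp2 := mem_range.1 (mem_product.1 hp).2
        have hq2 := mem_range.1 (mem_product.1 hq).2
        simp only [g, matOfWord_of_mem hp, matOfWord_of_mem hq, contact_iff_rowMajor hp2 hq2]
    _ = ∑ k ∈ range (m * ℓ), ∑ k' ∈ range (m * ℓ), g k k' := by
        simp only [sum_product_range_rowMajor (fun k => ∑ k' ∈ range (m * ℓ), g k k'),
          sum_product_range_rowMajor (g _)]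
    _ = ∑ k ∈ range N, ∑ k' ∈ range N, g k k' := by
        rw [← sum_subset (range_subset_range.2 hN) fun k _ hk =>
          sum_eq_zero fun k' _ => hg k k' (Or.inl (by simpa using hk))]
        refine sum_congr rfl fun k _ => (sum_subset (range_subset_range.2 hN) fun k' _ hk' =>
          hg k k' (Or.inr (by simpa using hk'))).symm
    _ = wordContacts ℓ N u := by rw [wordContacts, card_filter, sum_product]

noncomputable def dualMatrix (ℓ : ℕ) (M : ℕ → ℕ → Option Bool) : ℕ → ℕ → Option Bool :=
  matOfWord ℓ (reverseComplement (wordLength (wordOf ℓ M)) (wordOf ℓ M))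

lemma isGoodMatrix_dualMatrix (hM : IsGoodMatrix m ℓ M) : IsGoodMatrix m ℓ (dualMatrix ℓ M) :=
  isGoodMatrix_matOfWord hM.width_pos (isGoodWord_reverseComplement hM.isGoodWord)
    hM.wordLength_le

lemma IsGoodMatrix.dualMatrix_dualMatrix (hM : IsGoodMatrix m ℓ M) :
    dualMatrix ℓ (dualMatrix ℓ M) = M := by
  have hu := isGoodWord_reverseComplement hM.isGoodWord
  have hword : wordOf ℓ (dualMatrix ℓ M) =
      reverseComplement (wordLength (wordOf ℓ M)) (wordOf ℓ M) :=
    funext (matOfWord_div_mod hM.width_pos)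
  rw [dualMatrix, hword, hu.wordLength_eq,
    reverseComplement_reverseComplement hM.isGoodWord.eq_none_of_le, hM.matOfWord_wordOf]

lemma IsGoodMatrix.card_filter_dualMatrix (hM : IsGoodMatrix m ℓ M) (b : Bool) :
    #{p ∈ range m ×ˢ range ℓ | dualMatrix ℓ M p.1 p.2 = some b} =
      #{p ∈ range m ×ˢ range ℓ | M p.1 p.2 = some !b} := by
  have hu := hM.isGoodWord
  rw [dualMatrix, card_filter_matOfWord hM.wordLength_le
      (isGoodWord_reverseComplement hu).eq_none_of_le,
    letterCount_reverseComplement, ← card_filter_matOfWord hM.wordLength_le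
      hu.eq_none_of_le, hM.matOfWord_wordOf]

lemma IsGoodMatrix.contactCount_dualMatrix (hM : IsGoodMatrix m ℓ M) :
    contactCount m ℓ (dualMatrix ℓ M) = contactCount m ℓ M := by
  have hu := hM.isGoodWord
  rw [dualMatrix, contactCount_matOfWord hM.wordLength_le
      (isGoodWord_reverseComplement hu).eq_none_of_le,
    wordContacts_reverseComplement, ← contactCount_matOfWord hM.wordLength_le
      hu.eq_none_of_le, hM.matOfWord_wordOf]

end Matrices

theorem statement10_general (m ℓ : ℕ) :
    ∃ ι : {M : ℕ → ℕ → Option Bool // IsGoodMatrix m ℓ M} →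
          {M : ℕ → ℕ → Option Bool // IsGoodMatrix m ℓ M},
      Function.Involutive ι ∧
      ∀ M, oneCount m ℓ M.1 = zeroCount m ℓ (ι M).1 ∧
        zeroCount m ℓ M.1 = oneCount m ℓ (ι M).1 ∧
        contactCount m ℓ M.1 = contactCount m ℓ (ι M).1 :=
  ⟨fun M => ⟨dualMatrix ℓ M.1, isGoodMatrix_dualMatrix M.2⟩,
    fun M => Subtype.ext M.2.dualMatrix_dualMatrix,
    fun M => ⟨(M.2.card_filter_dualMatrix false).symm, (M.2.card_filter_dualMatrix true).symm,
      M.2.contactCount_dualMatrix.symm⟩⟩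

/-- Claim `i`: there is an involution `ι` on `𝐌_{m×ℓ}` interchanging `h` and
`w` and preserving `|·|`. -/
theorem statement10 (m ℓ : ℕ) (hm : 1 ≤ m) (hl : 1 ≤ ℓ) :
    ∃ ι : {M : ℕ → ℕ → Option Bool // IsGoodMatrix m ℓ M} →
          {M : ℕ → ℕ → Option Bool // IsGoodMatrix m ℓ M},
      Function.Involutive ι ∧
      ∀ M, oneCount m ℓ M.1 = zeroCount m ℓ (ι M).1 ∧
        zeroCount m ℓ M.1 = oneCount m ℓ (ι M).1 ∧
        contactCount m ℓ M.1 = contactCount m ℓ (ι M).1 :=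
  statement10_general m ℓ
end

section
/- Let m ≥ 1. (i) For every x ∈ D_{2,m}, area(x) + 2·degr(x) ≤ 3m. (ii) For every integer d with 0 ≤ d ≤ m, there exists x ∈ D_{2,m} with degr(x) = d and area(x) + 2·degr(x) = 3m. -/
open Finset

/- For `ℓ = 2` everything is explicit: `area = 3m - 2x₀ - x₁`, and `degr = δ⁺₁₁ + δ⁻₁₁` with at
most one nonzero term. If `x₁ ≤ m`, then `δ⁺₁₁ = 0` and `δ⁻₁₁ ≤ x₀`; if `x₁ > m`, then `δ⁻₁₁ = 0`
and `2·δ⁺₁₁ = 2(x₁ - m - 1) < x₁` because `x₁ ≤ 2m`. Equality holds for `(d, 0, 3m - d)`, of area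
`3m - 2d` and degree `δ⁻₁₁ = min(d, m) = d`. -/

lemma isDyck_two_iff (m : ℕ) (x : ℕ → ℤ) :
    IsDyck 2 m x ↔ (∀ i, 0 ≤ x i) ∧ x 0 ≤ m ∧ x 0 + x 1 ≤ 2 * m ∧
      x 0 + x 1 + x 2 = 3 * m ∧ ∀ i, 2 < i → x i = 0 := by
  constructor
  · rintro ⟨hnn, hle, hsum, htail⟩
    have h0 := hle 0 (by norm_num)
    have h1 := hle 1 (by norm_num)
    simp only [pSum, Finset.sum_range_succ, Finset.sum_range_zero] at h0 h1 hsum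
    push_cast at h0 h1 hsum
    exact ⟨hnn, by linarith, by linarith, by linarith, htail⟩
  · rintro ⟨hnn, h0, h1, hsum, htail⟩
    refine ⟨hnn, fun i hi => ?_, ?_, htail⟩
    · interval_cases i <;> simp only [pSum, Finset.sum_range_succ, Finset.sum_range_zero] <;>
        push_cast <;> linarith
    · simp only [pSum, Finset.sum_range_succ, Finset.sum_range_zero]
      push_cast
      linarith

lemma area_two (m : ℕ) (x : ℕ → ℤ) : area 2 m x = 3 * m - 2 * x 0 - x 1 := by
  rw [area, show Finset.Icc 1 2 = {1, 2} from rfl, Finset.sum_pair (by norm_num)]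
  simp only [dyckPos, pSum, Nat.one_le_ofNat, le_refl, if_true, Finset.sum_range_succ,
    Finset.sum_range_zero]
  push_cast
  ring

lemma degr_two (m : ℕ) (x : ℕ → ℤ) :
    degr 2 m x = min (x 1) (max 0 (x 1 - m - 1)) + min (x 0) (max 0 (m - x 1)) := by
  simp [degr, degrP, degrM, deltaP, deltaM]

theorem area_add_two_mul_degr_two_le {m : ℕ} {x : ℕ → ℤ} (hx : IsDyck 2 m x) :
    area 2 m x + 2 * degr 2 m x ≤ 3 * m := by
  obtain ⟨hnn, -, hx01, -, -⟩ := (isDyck_two_iff m x).1 hx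
  have hx0 := hnn 0
  have hx1 := hnn 1
  rw [area_two, degr_two]
  omega

def extremalPath (m d : ℕ) : ℕ → ℤ := fun i =>
  if i = 0 then d else if i = 2 then 3 * m - d else 0

section extremalPath

variable {m d : ℕ}

lemma extremalPath_zero : extremalPath m d 0 = d := rfl

lemma extremalPath_one : extremalPath m d 1 = 0 := rfl

lemma extremalPath_two : extremalPath m d 2 = 3 * m - d := rfl

lemma isDyck_extremalPath (hd : d ≤ m) : IsDyck 2 m (extremalPath m d) := by
  refine (isDyck_two_iff m _).2 ⟨fun i => ?_, ?_, ?_, ?_, fun i hi => ?_⟩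
  · unfold extremalPath
    split_ifs <;> omega
  · rw [extremalPath_zero]
    exact_mod_cast hd
  · rw [extremalPath_zero, extremalPath_one]
    omega
  · rw [extremalPath_zero, extremalPath_one, extremalPath_two]
    ring
  · simp only [extremalPath, if_neg (show i ≠ 0 by omega), if_neg (show i ≠ 2 by omega)]

lemma degr_extremalPath (hd : d ≤ m) : degr 2 m (extremalPath m d) = d := by
  rw [degr_two, extremalPath_zero, extremalPath_one]
  omega

lemma area_extremalPath : area 2 m (extremalPath m d) = 3 * m - 2 * d := by
  rw [area_two, extremalPath_zero, extremalPath_one]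
  ring

end extremalPath

theorem statement16_general (m : ℕ) :
    (∀ x : ℕ → ℤ, IsDyck 2 m x → area 2 m x + 2 * degr 2 m x ≤ 3 * (m : ℤ)) ∧
    (∀ d : ℕ, d ≤ m → ∃ x : ℕ → ℤ, IsDyck 2 m x ∧ degr 2 m x = (d : ℤ) ∧
      area 2 m x + 2 * degr 2 m x = 3 * (m : ℤ)) := by
  refine ⟨fun x hx => area_add_two_mul_degr_two_le hx, fun d hd => ?_⟩
  refine ⟨extremalPath m d, isDyck_extremalPath hd, degr_extremalPath hd, ?_⟩
  rw [area_extremalPath, degr_extremalPath hd]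
  ring

/-- Claim `maxarea`: for every `x ∈ 𝐃_{2,m}`, `area(x) + 2·degr(x) ≤ 3m`, and
for every `0 ≤ d ≤ m` there is `x ∈ 𝐃_{2,m}` with `degr(x) = d` attaining
equality. -/
theorem statement16 (m : ℕ) (hm : 1 ≤ m) :
    (∀ x : ℕ → ℤ, IsDyck 2 m x → area 2 m x + 2 * degr 2 m x ≤ 3 * (m : ℤ)) ∧
    (∀ d : ℕ, d ≤ m → ∃ x : ℕ → ℤ, IsDyck 2 m x ∧ degr 2 m x = (d : ℤ) ∧
      area 2 m x + 2 * degr 2 m x = 3 * (m : ℤ)) :=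
  statement16_general m
end

section
/- Let m ≥ 1 and let d ≥ 0 be an integer. Then the map x ↦ area(x) restricts to a bijection from D^d_{2,m} onto the set of integers {a : d ≤ a ≤ 3m−2d} (which is empty when 3m−2d < d). Equivalently, in ℤ[q,t], Σ_{x ∈ D^d_{2,m}} q^{area(x)} t^{3m−d−area(x)} = q^d t^{3m−2d} + q^{d+1} t^{3m−2d−1} + ⋯ + q^{3m−2d−1} t^{d+1} + q^{3m−2d} t^d. -/
open Finset

/-!
A `(2,m)`-Dyck path is determined by its first two steps `x₀, x₁`, and then
`area = 3m - 2x₀ - x₁` while `degr = δ⁺ + δ⁻` with `δ⁺ = max 0 (x₁ - m - 1)` and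
`δ⁻ = min x₀ (max 0 (m - x₁))`. Fixing the degree `d`, the paths fall into three families:
`x₀ = d, x₁ ≤ m - d`, whose areas fill the interval `[2m - d, 3m - 2d]`;
`x₁ = m - d, x₀ > d`, whose areas are the numbers below `2m - d` of the parity of `d`;
and `x₁ = m + 1 + d`, whose areas are the numbers below `2m - d` of the other parity.
-/

def pathOfSteps (m : ℕ) (x₀ x₁ : ℤ) : ℕ → ℤ
  | 0 => x₀
  | 1 => x₁
  | 2 => 3 * m - x₀ - x₁
  | _ => 0

def degrOfSteps (m x₀ x₁ : ℤ) : ℤ :=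
  min x₁ (max 0 (x₁ - m - 1)) + min x₀ (max 0 (m - x₁))

/-- The first two steps of the `(2,m)`-path of degree `d` and area `a`. -/
def stepsOfArea (m d a : ℤ) : ℤ × ℤ :=
  if 2 * m - d ≤ a then (d, 3 * m - 2 * d - a)
  else if (a - d) % 2 = 0 then ((2 * m + d - a) / 2, m - d)
  else ((2 * m - 1 - d - a) / 2, m + 1 + d)

def pathOfArea (m : ℕ) (d a : ℤ) : ℕ → ℤ :=
  pathOfSteps m (stepsOfArea m d a).1 (stepsOfArea m d a).2

lemma degr_two_s18 (m : ℕ) (x : ℕ → ℤ) : degr 2 m x = degrOfSteps m (x 0) (x 1) := by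
  simp [degr, degrP, degrM, deltaP, deltaM, degrOfSteps]

lemma IsDyck.eq_pathOfSteps {m : ℕ} {x : ℕ → ℤ} (hx : IsDyck 2 m x) :
    x = pathOfSteps m (x 0) (x 1) := by
  obtain ⟨-, -, hsum, hzero⟩ := hx
  simp only [pSum, Finset.sum_range_succ, Finset.sum_range_zero] at hsum
  funext i
  match i with
  | 0 | 1 => rfl
  | 2 => simp only [pathOfSteps]; push_cast at hsum; linarith
  | n + 3 => exact hzero _ (by omega)

lemma isDyck_pathOfSteps_iff (m : ℕ) (x₀ x₁ : ℤ) :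
    IsDyck 2 m (pathOfSteps m x₀ x₁) ↔ 0 ≤ x₀ ∧ x₀ ≤ m ∧ 0 ≤ x₁ ∧ x₀ + x₁ ≤ 2 * m := by
  constructor
  · rintro ⟨hnonneg, hbound, -, -⟩
    have h₀ := hbound 0 (by norm_num)
    have h₁ := hbound 1 (by norm_num)
    norm_num [pSum, Finset.sum_range_succ, pathOfSteps] at h₀ h₁
    exact ⟨hnonneg 0, h₀, hnonneg 1, by linarith⟩
  · rintro ⟨h₀, hm₀, h₁, h₀₁⟩
    refine ⟨fun i => ?_, fun i hi => ?_, ?_, fun i hi => ?_⟩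
    · match i with
      | 0 | 1 => assumption
      | 2 => simp only [pathOfSteps]; linarith
      | n + 3 => exact le_rfl
    · interval_cases i <;>
        simp only [pSum, Finset.sum_range_succ, Finset.sum_range_zero, pathOfSteps] <;>
        push_cast <;> linarith
    · simp only [pSum, Finset.sum_range_succ, Finset.sum_range_zero, pathOfSteps]
      push_cast
      ring
    · match i, hi with
      | n + 3, _ => rfl

lemma IsDyck.steps_bounds {m : ℕ} {x : ℕ → ℤ} (hx : IsDyck 2 m x) :
    0 ≤ x 0 ∧ x 0 ≤ m ∧ 0 ≤ x 1 ∧ x 0 + x 1 ≤ 2 * m :=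
  (isDyck_pathOfSteps_iff m _ _).1 (hx.eq_pathOfSteps ▸ hx)

lemma degrOfSteps_le_area_and_area_le {m x₀ x₁ : ℤ} (hx₀ : 0 ≤ x₀) (hx₀m : x₀ ≤ m)
    (hx₁ : 0 ≤ x₁) (hx₀₁ : x₀ + x₁ ≤ 2 * m) :
    degrOfSteps m x₀ x₁ ≤ 3 * m - 2 * x₀ - x₁ ∧
      3 * m - 2 * x₀ - x₁ ≤ 3 * m - 2 * degrOfSteps m x₀ x₁ := by
  unfold degrOfSteps
  omega

lemma stepsOfArea_degrOfSteps {m x₀ x₁ : ℤ} (hx₀ : 0 ≤ x₀) (hx₁ : 0 ≤ x₁)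
    (hx₀₁ : x₀ + x₁ ≤ 2 * m) :
    stepsOfArea m (degrOfSteps m x₀ x₁) (3 * m - 2 * x₀ - x₁) = (x₀, x₁) := by
  unfold stepsOfArea degrOfSteps
  split_ifs <;> simp only [Prod.mk.injEq] <;> omega

lemma stepsOfArea_spec {m d a : ℤ} (hd : 0 ≤ d) (hda : d ≤ a) (ha : a ≤ 3 * m - 2 * d) :
    let x := stepsOfArea m d a
    0 ≤ x.1 ∧ x.1 ≤ m ∧ 0 ≤ x.2 ∧ x.1 + x.2 ≤ 2 * m ∧ degrOfSteps m x.1 x.2 = d ∧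
      3 * m - 2 * x.1 - x.2 = a := by
  unfold stepsOfArea degrOfSteps
  split_ifs <;> omega

theorem statement18_general (m : ℕ) (d : ℕ) :
    Set.BijOn (area 2 m) {x : ℕ → ℤ | IsDyck 2 m x ∧ degr 2 m x = (d : ℤ)}
      {a : ℤ | (d : ℤ) ≤ a ∧ a ≤ 3 * (m : ℤ) - 2 * (d : ℤ)} := by
  refine Set.InvOn.bijOn (f' := pathOfArea m d) ⟨fun x ⟨hx, hdeg⟩ => ?_, fun a ⟨hda, ha⟩ => ?_⟩
    (fun x ⟨hx, hdeg⟩ => ?_) (fun a ⟨hda, ha⟩ => ?_)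
  · obtain ⟨h₀, -, h₁, h₀₁⟩ := hx.steps_bounds
    rw [pathOfArea, ← hdeg, degr_two_s18, area_two, stepsOfArea_degrOfSteps h₀ h₁ h₀₁]
    exact hx.eq_pathOfSteps.symm
  · obtain ⟨-, -, -, -, -, harea⟩ := stepsOfArea_spec (Int.natCast_nonneg d) hda ha
    simpa [area_two, pathOfArea, pathOfSteps] using harea
  · obtain ⟨h₀, hm₀, h₁, h₀₁⟩ := hx.steps_bounds
    rw [← hdeg, degr_two_s18, Set.mem_ofPred_eq, area_two]
    exact degrOfSteps_le_area_and_area_le h₀ hm₀ h₁ h₀₁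
  · obtain ⟨h₀, hm₀, h₁, h₀₁, hdeg, -⟩ := stepsOfArea_spec (Int.natCast_nonneg d) hda ha
    refine ⟨(isDyck_pathOfSteps_iff m _ _).2 ⟨h₀, hm₀, h₁, h₀₁⟩, ?_⟩
    simpa [degr_two_s18, pathOfArea, pathOfSteps] using hdeg

/-- Claim `stringsym`: `area` restricts to a bijection from `𝐃^d_{2,m}` onto
`{a : ℤ | d ≤ a ≤ 3m − 2d}`. -/
theorem statement18 (m : ℕ) (hm : 1 ≤ m) (d : ℕ) :
    Set.BijOn (area 2 m) {x : ℕ → ℤ | IsDyck 2 m x ∧ degr 2 m x = (d : ℤ)}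
      {a : ℤ | (d : ℤ) ≤ a ∧ a ≤ 3 * (m : ℤ) - 2 * (d : ℤ)} :=
  statement18_general m d
end
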